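/- Let m ≥ 1 be an integer and let ζ : ℝ^d → ℝ^d be m-times continuously differentiable with λ := inf_{θ∈[0,1]} inf_{x∈ℝ^d} |det(I + θ Dζ(x))| > 0 and M_m := max_{0≤k≤m} sup_{x∈ℝ^d} |D^k ζ(x)| < ∞. Let τ(x) = x + ζ(x), ζ*(x) = −x + τ^{-1}(x), and define 𝔠(x) = det(I + Dζ*(x)) − 1. Then for every integer k with 0 ≤ k ≤ m−1 one has sup_{x∈ℝ^d} |D^k 𝔠(x)| ≤ N · max_{1≤j≤k+1} sup_{ℝ^d} |D^j ζ| with a constant N = N(d, λ, m, M_m). -/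

import Mathlib

/-!
By the inverse function theorem `ι` is `C^m` with `Dι = Ψ ∘ ι`, `Ψ = (I + Dζ)⁻¹`, so
`𝔠 = G ∘ Dζ ∘ ι` with `G A = det ((I + A)⁻¹) - 1`. The hypothesis on `det (I + θ Dζ)` keeps the
whole segment `[0, Dζ x]` in the compact set `K = {A | ‖A‖ ≤ M_m, λ ≤ |det (I + A)|}`, on which
`I + A` is invertible. Hence all derivatives of `G` and of the inversion are bounded on `K`, and
`G 0 = 0` gives `‖G (Dζ x)‖ ≤ const * ‖Dζ x‖`. Faà di Bruno's bound applied to `Dι = Ψ ∘ ι`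
bounds the derivatives of `ι` inductively in terms of `M_m` alone. For `G ∘ Dζ`, writing
`Dζ = s • h` with `s` the size of the derivatives of `Dζ`, every derivative of `A ↦ G (s • A)`
carries a factor `s`: this is what makes the bound linear in `C`. A last application of Faà di
Bruno's bound composes with `ι`.
-/

open MeasureTheory Real

noncomputable section

/-- `ℝ^d` with the Euclidean norm. -/
abbrev Rd (d : ℕ) : Type := EuclideanSpace ℝ (Fin d)

open Function Set Topology
open scoped Nat

section IteratedFDerivBounds

variable {E F G : Type*} [NormedAddCommGroup E] [NormedSpace ℝ E] [NormedAddCommGroup F]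
  [NormedSpace ℝ F] [NormedAddCommGroup G] [NormedSpace ℝ G]

theorem IsCompact.exists_bound_iteratedFDeriv {g : F → G} {t K : Set F} {n : ℕ}
    (hK : IsCompact K) (ht : IsOpen t) (hKt : K ⊆ t) (hg : ContDiffOn ℝ n g t) :
    ∃ C, ∀ i ≤ n, ∀ z ∈ K, ‖iteratedFDeriv ℝ i g z‖ ≤ C := by
  have hcont : ContinuousOn (fun z => ∑ i ∈ Finset.range (n + 1), ‖iteratedFDeriv ℝ i g z‖) t :=
    continuousOn_finsetSum _ fun i hi => (hg.continuousOn_iteratedFDerivWithin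
      (by exact_mod_cast Finset.mem_range_succ_iff.1 hi) ht.uniqueDiffOn).norm.congr
      fun z hz => by simp only [iteratedFDerivWithin_of_isOpen i ht hz]
  obtain ⟨C, hC⟩ := hK.exists_bound_of_continuousOn (hcont.mono hKt)
  refine ⟨C, fun i hi z hz => le_trans ?_ ((le_abs_self _).trans (hC z hz))⟩
  exact Finset.single_le_sum (f := fun j => ‖iteratedFDeriv ℝ j g z‖) (fun j _ => norm_nonneg _)
    (Finset.mem_range_succ_iff.2 hi)

theorem norm_iteratedFDeriv_comp_le_of_isOpen {g : F → G} {f : E → F} {t : Set F}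
    {N : WithTop ℕ∞} {n : ℕ} (ht : IsOpen t) (hg : ContDiffOn ℝ N g t) (hf : ContDiff ℝ N f)
    (hft : ∀ y, f y ∈ t) (hn : n ≤ N) (x : E) {C D : ℝ}
    (hC : ∀ i ≤ n, ‖iteratedFDeriv ℝ i g (f x)‖ ≤ C)
    (hD : ∀ i, 1 ≤ i → i ≤ n → ‖iteratedFDeriv ℝ i f x‖ ≤ D ^ i) :
    ‖iteratedFDeriv ℝ n (g ∘ f) x‖ ≤ n ! * C * D ^ n :=
  norm_iteratedFDeriv_comp_le' (range_subset_iff.2 hft) ht.uniqueDiffOn hg hf hn x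
    (fun i hi => by rw [iteratedFDerivWithin_of_isOpen i ht (hft x)]; exact hC i hi) hD

theorem norm_iteratedFDeriv_comp_smul_le {g : F → G} {t : Set F} {i : ℕ} (ht : IsOpen t)
    (hg : ContDiffOn ℝ i g t) (s : ℝ) {z : F} (hz : s • z ∈ t) :
    ‖iteratedFDeriv ℝ i (fun w => g (s • w)) z‖ ≤ ‖iteratedFDeriv ℝ i g (s • z)‖ * ‖s‖ ^ i := by
  set L : F →L[ℝ] F := s • ContinuousLinearMap.id ℝ F
  have htL : IsOpen (L ⁻¹' t) := ht.preimage L.continuous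
  have hL : ‖L‖ ≤ ‖s‖ := by
    simpa [L, norm_smul] using
      mul_le_mul_of_nonneg_left (ContinuousLinearMap.norm_id_le (𝕜 := ℝ) (E := F)) (norm_nonneg s)
  rw [show (fun w => g (s • w)) = g ∘ L from rfl, ← iteratedFDerivWithin_of_isOpen i htL hz,
    L.iteratedFDerivWithin_comp_right hg ht.uniqueDiffOn htL.uniqueDiffOn hz le_rfl,
    show L z = s • z from rfl, iteratedFDerivWithin_of_isOpen i ht hz]
  calc _ ≤ ‖iteratedFDeriv ℝ i g (s • z)‖ * ∏ _ : Fin i, ‖L‖ :=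
        ContinuousMultilinearMap.norm_compContinuousLinearMap_le _ _
    _ ≤ _ := by rw [Finset.prod_const, Finset.card_univ, Fintype.card_fin]; gcongr

theorem norm_iteratedFDeriv_comp_le_mul_of_isOpen {g : F → G} {f : E → F} {t : Set F}
    {N : WithTop ℕ∞} {n : ℕ} (ht : IsOpen t) (hg : ContDiffOn ℝ N g t) (hf : ContDiff ℝ N f)
    (hft : ∀ y, f y ∈ t) (hn : n ≤ N) (x : E) {s C D : ℝ} (hs0 : 0 ≤ s) (hs1 : s ≤ 1)
    (hg0 : ‖g (f x)‖ ≤ C * s)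
    (hC : ∀ i, 1 ≤ i → i ≤ n → ‖iteratedFDeriv ℝ i g (f x)‖ ≤ C)
    (hD : ∀ i, 1 ≤ i → i ≤ n → ‖iteratedFDeriv ℝ i f x‖ ≤ s * D ^ i) :
    ‖iteratedFDeriv ℝ n (g ∘ f) x‖ ≤ n ! * (C * s) * D ^ n := by
  rcases n.eq_zero_or_pos with rfl | hn1
  · simpa using hg0
  have hC0 : 0 ≤ C := (norm_nonneg _).trans (hC 1 le_rfl hn1)
  have hiN : ∀ i ≤ n, (i : WithTop ℕ∞) ≤ N := fun i hi =>
    (by exact_mod_cast hi : (i : WithTop ℕ∞) ≤ n).trans hn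
  rcases hs0.eq_or_lt with rfl | hs
  · simpa [zero_pow hn1.ne'] using norm_iteratedFDeriv_comp_le_of_isOpen ht hg hf hft hn x
      (C := C) (D := 0)
      (fun i _ => by
        rcases i.eq_zero_or_pos with rfl | hi
        · rw [norm_iteratedFDeriv_zero]; exact hg0.trans (by simpa using hC0)
        · exact hC i hi (by omega))
      (fun i hi1 hin => by simpa [zero_pow (by omega : i ≠ 0)] using hD i hi1 hin)
  -- With `f = s • h`, every derivative of `w ↦ g (s • w)` carries a factor `s`.
  have hsf : ∀ y, s • s⁻¹ • f y = f y := fun y => by simp [smul_smul, hs.ne']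
  have hgf : g ∘ f = (fun w => g (s • w)) ∘ (s⁻¹ • f) := funext fun y => by simp [hsf]
  rw [hgf]
  refine norm_iteratedFDeriv_comp_le_of_isOpen (ht.preimage (continuous_const_smul s))
    (hg.comp_continuousLinearMap (s • ContinuousLinearMap.id ℝ F)) (hf.const_smul s⁻¹)
    (fun y => by simp [hsf, hft]) hn x (fun i hi => ?_) (fun i hi1 hin => ?_)
  · rcases i.eq_zero_or_pos with rfl | hi1
    · simpa [hsf] using hg0
    calc _ ≤ ‖iteratedFDeriv ℝ i g (s • s⁻¹ • f x)‖ * ‖s‖ ^ i :=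
          norm_iteratedFDeriv_comp_smul_le ht (hg.of_le (hiN i hi)) s (by rw [hsf]; exact hft x)
      _ = ‖iteratedFDeriv ℝ i g (f x)‖ * s ^ i := by rw [hsf, Real.norm_of_nonneg hs.le]
      _ ≤ C * s :=
          mul_le_mul (hC i hi1 hi) (pow_le_of_le_one hs.le hs1 hi1.ne') (by positivity) hC0
  · rw [iteratedFDeriv_const_smul_apply' ((hf.of_le (hiN i hin)).contDiffAt), norm_smul,
      norm_inv, Real.norm_of_nonneg hs.le, inv_mul_le_iff₀ hs]
    exact hD i hi1 hin

theorem IsCompact.exists_bound_iteratedFDeriv_comp {g : F → G} {t K : Set F} {n : ℕ}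
    (hK : IsCompact K) (ht : IsOpen t) (hKt : K ⊆ t) (hg : ContDiffOn ℝ n g t) (D : ℝ) :
    ∃ P, ∀ f : E → F, ContDiff ℝ n f → (∀ y, f y ∈ K) →
      (∀ i, 1 ≤ i → i ≤ n → ∀ y, ‖iteratedFDeriv ℝ i f y‖ ≤ D) →
      ∀ i ≤ n, ∀ y, ‖iteratedFDeriv ℝ i (g ∘ f) y‖ ≤ P := by
  obtain ⟨C, hC⟩ := hK.exists_bound_iteratedFDeriv ht hKt hg
  refine ⟨n ! * C * max 1 D ^ n, fun f hf hfK hfD i hi y => ?_⟩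
  have hC0 : 0 ≤ C := (norm_nonneg _).trans (hC 0 (Nat.zero_le _) _ (hfK y))
  calc _ ≤ i ! * C * max 1 D ^ i :=
        norm_iteratedFDeriv_comp_le_of_isOpen ht hg hf (fun y => hKt (hfK y))
          (by exact_mod_cast hi) y (fun j hj => hC j (hj.trans hi) _ (hfK y))
          fun j hj1 hjn => (hfD j hj1 (hjn.trans hi) y).trans
            ((le_max_right _ _).trans (le_self_pow₀ (le_max_left _ _) (by omega)))
    _ ≤ n ! * C * max 1 D ^ n := by gcongr; exact le_max_left _ _

theorem IsCompact.exists_bound_iteratedFDeriv_comp_le_mul {g : F → G} {t K : Set F} {n : ℕ}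
    (hK : IsCompact K) (ht : IsOpen t) (hKt : K ⊆ t) (hg : ContDiffOn ℝ (n + 1) g t)
    (hg0 : g 0 = 0) (S : ℝ) :
    ∃ P, ∀ f : E → F, ContDiff ℝ n f → (∀ y, segment ℝ 0 (f y) ⊆ K) →
      (∀ i ≤ n, ∀ y, ‖iteratedFDeriv ℝ i f y‖ ≤ S) →
      ∀ k ≤ n, ∀ s, (∀ i ≤ k, ∀ y, ‖iteratedFDeriv ℝ i f y‖ ≤ s) →
      ∀ i ≤ k, ∀ y, ‖iteratedFDeriv ℝ i (g ∘ f) y‖ ≤ P * s := by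
  obtain ⟨C, hC⟩ := hK.exists_bound_iteratedFDeriv (n := n + 1) ht hKt (by exact_mod_cast hg)
  set D := max 1 S
  refine ⟨n ! * C * D ^ n, fun f hf hfK hfS k hk s hfs i hi y => ?_⟩
  have hfy : f y ∈ K := hfK y (right_mem_segment _ _ _)
  have hC0 : 0 ≤ C := (norm_nonneg _).trans (hC 0 (Nat.zero_le _) _ hfy)
  have hD : 0 < D := lt_max_of_lt_left one_pos
  set σ := min s S
  have hσ : ∀ j ≤ k, ‖iteratedFDeriv ℝ j f y‖ ≤ σ := fun j hj =>
    le_min (hfs j hj y) (hfS j (hj.trans hk) y)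
  have hσ0 : 0 ≤ σ := (norm_nonneg _).trans (hσ 0 (Nat.zero_le _))
  have hσD : σ / D ≤ 1 := (div_le_one hD).2 ((min_le_right _ _).trans (le_max_right _ _))
  have hlip : ‖g (f y)‖ ≤ C * ‖f y‖ := by
    simpa [hg0] using (convex_segment (0 : F) (f y)).norm_image_sub_le_of_norm_fderiv_le
      (fun z hz => (hg.contDiffAt (ht.mem_nhds (hKt (hfK y hz)))).differentiableAt (by simp))
      (fun z hz => by rw [← norm_iteratedFDeriv_one]; exact hC 1 (by omega) z (hfK y hz))
      (left_mem_segment _ _ _) (right_mem_segment _ _ _)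
  have hCD : C * D * (σ / D) = C * σ := by field_simp
  calc _ ≤ i ! * (C * D * (σ / D)) * D ^ i :=
        norm_iteratedFDeriv_comp_le_mul_of_isOpen ht (hg.of_le (by norm_cast; omega)) hf
          (fun y => hKt (hfK y (right_mem_segment _ _ _))) (by exact_mod_cast hi.trans hk) y
          (div_nonneg hσ0 hD.le) hσD
          (by rw [hCD]; exact hlip.trans (by gcongr; simpa using hσ 0 (Nat.zero_le _)))
          (fun j hj1 hji => (hC j (by omega) _ hfy).trans
            (le_mul_of_one_le_right hC0 (le_max_left _ _)))
          fun j hj1 hji => (hσ j (hji.trans hi)).trans (by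
            rw [div_mul_eq_mul_div, le_div_iff₀ hD]
            exact mul_le_mul_of_nonneg_left (le_self_pow₀ (le_max_left _ _) (by omega)) hσ0)
    _ = i ! * C * D ^ i * σ := by rw [hCD]; ring
    _ ≤ n ! * C * D ^ n * s := by
        gcongr <;> first | exact le_max_left _ _ | exact min_le_left _ _ | omega

-- If `Df = Ψ ∘ f` and `‖D^i Ψ‖ ≤ P`, Faà di Bruno's bound for `D^(j+1) f = D^j (Ψ ∘ f)` gives
-- this recursion for a bound on the derivatives of `f` of orders `1, …, j`.
def derivBound (P : ℝ) : ℕ → ℝ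
  | 0 => 1
  | j + 1 => max (derivBound P j) (j ! * P * derivBound P j ^ j)

theorem one_le_derivBound (P : ℝ) : ∀ j, 1 ≤ derivBound P j
  | 0 => le_rfl
  | j + 1 => (one_le_derivBound P j).trans (le_max_left _ _)

theorem norm_iteratedFDeriv_le_derivBound {f : E → F} {Ψ : F → E →L[ℝ] F} {n : ℕ} {P : ℝ}
    (hΨ : ContDiff ℝ n Ψ) (hf : ContDiff ℝ n f) (hfΨ : fderiv ℝ f = Ψ ∘ f)
    (hP : ∀ i ≤ n, ∀ y, ‖iteratedFDeriv ℝ i Ψ y‖ ≤ P) :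
    ∀ j, 1 ≤ j → j ≤ n + 1 → ∀ x, ‖iteratedFDeriv ℝ j f x‖ ≤ derivBound P (n + 1) := by
  suffices h : ∀ j ≤ n + 1, ∀ i, 1 ≤ i → i ≤ j → ∀ x, ‖iteratedFDeriv ℝ i f x‖ ≤ derivBound P j
    from h (n + 1) le_rfl
  intro j
  induction j with
  | zero => intro _ i hi1 hi0; omega
  | succ j ih =>
    intro hj i hi1 hij x
    rcases hij.lt_or_eq with hij | rfl
    · exact (ih (by omega) i hi1 (by omega) x).trans (le_max_left _ _)
    rw [← norm_iteratedFDeriv_fderiv, hfΨ]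
    refine le_trans ?_ (le_max_right _ _)
    exact norm_iteratedFDeriv_comp_le hΨ hf (by exact_mod_cast Nat.le_of_succ_le_succ hj) x
      (fun k hk => hP k (by omega) _) fun k hk1 hkj =>
        (ih (by omega) k hk1 hkj x).trans (le_self_pow₀ (one_le_derivBound P j) (by omega))

end IteratedFDerivBounds

theorem contDiffAt_and_hasFDerivAt_of_leftInverse {E : Type*} [NormedAddCommGroup E]
    [NormedSpace ℝ E] [CompleteSpace E] {f g : E → E} {n : WithTop ℕ∞} {a : E}
    (hf : ContDiffAt ℝ n f a) (hn : n ≠ 0) (ha : IsUnit (fderiv ℝ f a)) (hgf : LeftInverse g f) :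
    ContDiffAt ℝ n g (f a) ∧ HasFDerivAt g (Ring.inverse (fderiv ℝ f a)) (f a) := by
  obtain ⟨u, hu⟩ := ha
  set e := ContinuousLinearEquiv.ofUnit u
  have hfa : HasFDerivAt f (e : E →L[ℝ] E) a := by
    rw [show (e : E →L[ℝ] E) = fderiv ℝ f a from hu]
    exact (hf.differentiableAt (by simpa using hn)).hasFDerivAt
  have hstrict := hf.hasStrictFDerivAt' hfa hn
  -- Near `f a`, `f ∘ φ = id` for the local inverse `φ`, hence `g = g ∘ f ∘ φ = φ`.
  have hgφ : g =ᶠ[𝓝 (f a)] hf.localInverse hfa hn :=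
    hstrict.eventually_right_inverse.mono fun z hz => by
      rw [← hgf (hf.localInverse hfa hn z)]; exact congrArg g hz.symm
  refine ⟨(hf.to_localInverse hfa hn).congr_of_eventuallyEq hgφ, ?_⟩
  rw [← hu, Ring.inverse_unit]
  exact hstrict.to_localInverse.hasFDerivAt.congr_of_eventuallyEq hgφ

section Jacobian

variable {E : Type*} [NormedAddCommGroup E] [NormedSpace ℝ E]

def detBoundedBall (lam M : ℝ) : Set (E →L[ℝ] E) :=
  {A | ‖A‖ ≤ M ∧ lam ≤ |(ContinuousLinearMap.id ℝ E + A).det|}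

theorem det_ne_zero_of_mem_detBoundedBall {lam M : ℝ} (hlam : 0 < lam) {A : E →L[ℝ] E}
    (hA : A ∈ detBoundedBall lam M) : (ContinuousLinearMap.id ℝ E + A).det ≠ 0 :=
  abs_pos.1 (hlam.trans_le hA.2)

theorem segment_zero_subset_detBoundedBall {lam M : ℝ} {A : E →L[ℝ] E} (hA : ‖A‖ ≤ M)
    (hdet : ∀ θ ∈ Icc (0 : ℝ) 1, lam ≤ |(ContinuousLinearMap.id ℝ E + θ • A).det|) :
    segment ℝ 0 A ⊆ detBoundedBall lam M := by
  rw [segment_eq_image]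
  rintro _ ⟨θ, hθ, rfl⟩
  simp only [smul_zero, zero_add]
  refine ⟨?_, hdet θ hθ⟩
  rw [norm_smul, Real.norm_of_nonneg hθ.1]
  exact (mul_le_of_le_one_left (norm_nonneg _) hθ.2).trans hA

theorem isOpen_setOf_isUnit_id_add [CompleteSpace E] :
    IsOpen {A : E →L[ℝ] E | IsUnit (ContinuousLinearMap.id ℝ E + A)} :=
  Units.isOpen.preimage (continuous_const.add continuous_id)

theorem contDiffOn_ringInverse_id_add [CompleteSpace E] {n : WithTop ℕ∞} :
    ContDiffOn ℝ n (fun A : E →L[ℝ] E => Ring.inverse (ContinuousLinearMap.id ℝ E + A))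
      {A | IsUnit (ContinuousLinearMap.id ℝ E + A)} := fun A hA =>
  ((contDiffAt_ringInverse ℝ hA.unit).comp A (contDiffAt_const.add contDiffAt_id)).contDiffWithinAt

def detInverseSubOne (A : E →L[ℝ] E) : ℝ :=
  (Ring.inverse (ContinuousLinearMap.id ℝ E + A)).det - 1

theorem detInverseSubOne_zero : detInverseSubOne (0 : E →L[ℝ] E) = 0 := by
  simp [detInverseSubOne, ← ContinuousLinearMap.one_def, ContinuousLinearMap.det]

theorem det_id_add_fderiv_sub_id_sub_one {ζ ι : E → E} (hι : Differentiable ℝ ι)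
    (hDι : ∀ y, fderiv ℝ ι y = Ring.inverse (ContinuousLinearMap.id ℝ E + fderiv ℝ ζ (ι y))) :
    (fun y => (ContinuousLinearMap.id ℝ E + fderiv ℝ (fun z => ι z - z) y).det - 1) =
      detInverseSubOne ∘ fderiv ℝ ζ ∘ ι := by
  funext y
  rw [fderiv_fun_sub (hι y) differentiableAt_fun_id, fderiv_fun_id, hDι]
  simp [detInverseSubOne]

variable [FiniteDimensional ℝ E]

theorem ContinuousLinearMap.contDiff_det {n : WithTop ℕ∞} :
    ContDiff ℝ n fun A : E →L[ℝ] E => A.det := by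
  let b := Module.finBasis ℝ E
  have hentry : ∀ i j, ContDiff ℝ n fun A : E →L[ℝ] E => LinearMap.toMatrix b b A i j := by
    intro i j
    simp only [LinearMap.toMatrix_apply]
    exact ((LinearMap.toContinuousLinearMap (b.coord i)).comp
      (ContinuousLinearMap.apply ℝ E (b j))).contDiff
  simp_rw [← LinearMap.det_toMatrix b, Matrix.det_apply']
  exact ContDiff.sum fun σ _ => contDiff_const.mul (contDiff_prod fun i _ => hentry _ _)

theorem ContinuousLinearMap.isUnit_of_det_ne_zero {A : E →L[ℝ] E} (h : A.det ≠ 0) : IsUnit A :=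
  ⟨ContinuousLinearEquiv.toUnit
    (LinearMap.equivOfDetNeZero (A : E →ₗ[ℝ] E) h).toContinuousLinearEquiv, rfl⟩

theorem contDiffOn_detInverseSubOne {n : WithTop ℕ∞} :
    ContDiffOn ℝ n (detInverseSubOne (E := E)) {A | IsUnit (ContinuousLinearMap.id ℝ E + A)} :=
  (ContinuousLinearMap.contDiff_det.comp_contDiffOn contDiffOn_ringInverse_id_add).sub
    contDiffOn_const

theorem contDiff_and_fderiv_eq_of_inverse_id_add {ζ ι : E → E} {n : WithTop ℕ∞}
    (hζ : ContDiff ℝ n ζ) (hn : n ≠ 0)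
    (hdet : ∀ x, (ContinuousLinearMap.id ℝ E + fderiv ℝ ζ x).det ≠ 0)
    (hl : LeftInverse ι fun x => x + ζ x) (hr : RightInverse ι fun x => x + ζ x) :
    ContDiff ℝ n ι ∧
      ∀ y, fderiv ℝ ι y = Ring.inverse (ContinuousLinearMap.id ℝ E + fderiv ℝ ζ (ι y)) := by
  have hτ' : ∀ x, fderiv ℝ (fun x => x + ζ x) x = ContinuousLinearMap.id ℝ E + fderiv ℝ ζ x :=
    fun x => ((hasFDerivAt_id x).add
      ((hζ.differentiable hn).differentiableAt.hasFDerivAt)).fderiv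
  have key : ∀ y, ContDiffAt ℝ n ι y ∧ HasFDerivAt ι
      (Ring.inverse (ContinuousLinearMap.id ℝ E + fderiv ℝ ζ (ι y))) y := fun y => by
    have := contDiffAt_and_hasFDerivAt_of_leftInverse (f := fun x => x + ζ x)
      (contDiff_id.add hζ).contDiffAt hn
      ((hτ' _).symm ▸ ContinuousLinearMap.isUnit_of_det_ne_zero (hdet (ι y))) hl
    rwa [show ι y + ζ (ι y) = y from hr y, hτ'] at this
  exact ⟨contDiff_iff_contDiffAt.2 fun y => (key y).1, fun y => (key y).2.fderiv⟩

theorem isCompact_detBoundedBall (lam M : ℝ) : IsCompact (detBoundedBall (E := E) lam M) := by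
  refine (isCompact_closedBall (0 : E →L[ℝ] E) M).of_isClosed_subset ?_
    fun A hA => by simpa using hA.1
  exact (isClosed_le continuous_norm continuous_const).inter (isClosed_le continuous_const
    (ContinuousLinearMap.continuous_det.comp (continuous_const.add continuous_id)).abs)

theorem detBoundedBall_subset {lam : ℝ} (hlam : 0 < lam) (M : ℝ) :
    detBoundedBall lam M ⊆ {A : E →L[ℝ] E | IsUnit (ContinuousLinearMap.id ℝ E + A)} :=
  fun _ hA => ContinuousLinearMap.isUnit_of_det_ne_zero (det_ne_zero_of_mem_detBoundedBall hlam hA)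

theorem exists_bound_iteratedFDeriv_of_fderiv_eq_ringInverse (n : ℕ) {lam : ℝ} (hlam : 0 < lam)
    (M : ℝ) :
    ∃ R, 1 ≤ R ∧ ∀ ζ ι : E → E, ContDiff ℝ (n + 1) ζ → (∀ x, fderiv ℝ ζ x ∈ detBoundedBall lam M) →
      (∀ j, 1 ≤ j → j ≤ n + 1 → ∀ x, ‖iteratedFDeriv ℝ j ζ x‖ ≤ M) → ContDiff ℝ n ι →
      (∀ y, fderiv ℝ ι y = Ring.inverse (ContinuousLinearMap.id ℝ E + fderiv ℝ ζ (ι y))) →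
      ∀ j, 1 ≤ j → j ≤ n + 1 → ∀ x, ‖iteratedFDeriv ℝ j ι x‖ ≤ R := by
  obtain ⟨P, hP⟩ := (isCompact_detBoundedBall (E := E) lam M).exists_bound_iteratedFDeriv_comp
    (E := E) isOpen_setOf_isUnit_id_add (detBoundedBall_subset hlam M) contDiffOn_ringInverse_id_add M
  refine ⟨derivBound P (n + 1), one_le_derivBound P _, fun ζ ι hζ hζK hM hι hDι => ?_⟩
  have hDζ : ContDiff ℝ n (fderiv ℝ ζ) := hζ.fderiv_right le_rfl
  exact norm_iteratedFDeriv_le_derivBound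
    (contDiffOn_ringInverse_id_add.comp_contDiff hDζ fun x => detBoundedBall_subset hlam M (hζK x))
    hι (funext hDι)
    (hP _ hDζ hζK fun i _ hi x => by rw [norm_iteratedFDeriv_fderiv]; exact hM _ (by omega) (by omega) x)

theorem exists_bound_iteratedFDeriv_detInverseSubOne_comp_fderiv (n : ℕ) {lam : ℝ}
    (hlam : 0 < lam) (M : ℝ) :
    ∃ Q, ∀ ζ : E → E, ContDiff ℝ (n + 1) ζ →
      (∀ x, segment ℝ 0 (fderiv ℝ ζ x) ⊆ detBoundedBall lam M) →
      (∀ j, 1 ≤ j → j ≤ n + 1 → ∀ x, ‖iteratedFDeriv ℝ j ζ x‖ ≤ M) →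
      ∀ k ≤ n, ∀ C, (∀ j, 1 ≤ j → j ≤ k + 1 → ∀ x, ‖iteratedFDeriv ℝ j ζ x‖ ≤ C) →
      ∀ i ≤ k, ∀ x, ‖iteratedFDeriv ℝ i (detInverseSubOne ∘ fderiv ℝ ζ) x‖ ≤ Q * C := by
  obtain ⟨Q, hQ⟩ :=
    (isCompact_detBoundedBall (E := E) lam M).exists_bound_iteratedFDeriv_comp_le_mul (E := E)
    isOpen_setOf_isUnit_id_add (detBoundedBall_subset hlam M) contDiffOn_detInverseSubOne
    detInverseSubOne_zero M
  refine ⟨Q, fun ζ hζ hseg hM k hk C hC => hQ _ (hζ.fderiv_right le_rfl) hseg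
    (fun i hi x => ?_) k hk C fun i hi x => ?_⟩
  all_goals rw [norm_iteratedFDeriv_fderiv]
  exacts [hM _ (by omega) (by omega) x, hC _ (by omega) (by omega) x]

end Jacobian

/-- let `ζ : ℝ^d → ℝ^d` be `C^m` (`m ≥ 1`) with
`λ ≤ |det(I + θDζ)|` for `θ ∈ [0,1]` and `max_{0≤k≤m} sup_x ‖D^kζ(x)‖ ≤ M_m`,
let `τ(x) = x + ζ(x)` (a `C^m`-diffeomorphism with inverse `ι`),
`ζ*(x) = −x + τ^{-1}(x)` and `𝔠(x) = det(I + Dζ*(x)) − 1`.  Then for every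
`0 ≤ k ≤ m−1` one has `sup_x |D^k 𝔠(x)| ≤ N max_{1≤j≤k+1} sup_x ‖D^j ζ‖`
with a constant `N = N(d, λ, m, M_m)`. -/
theorem statement3 (d m : ℕ) (hm : 1 ≤ m) (lam Mm : ℝ) (hlam : 0 < lam) :
    ∃ N : ℝ,
      ∀ ζ ι : Rd d → Rd d, ContDiff ℝ (m : ℕ∞) ζ →
        (∀ θ ∈ Set.Icc (0 : ℝ) 1, ∀ x : Rd d,
          lam ≤ |(ContinuousLinearMap.id ℝ (Rd d) + θ • fderiv ℝ ζ x).det|) →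
        (∀ k ≤ m, ∀ x : Rd d, ‖iteratedFDeriv ℝ k ζ x‖ ≤ Mm) →
        Function.LeftInverse ι (fun x => x + ζ x) →
        Function.RightInverse ι (fun x => x + ζ x) →
        ∀ k ≤ m - 1, ∀ C : ℝ,
          (∀ j, 1 ≤ j → j ≤ k + 1 → ∀ x : Rd d, ‖iteratedFDeriv ℝ j ζ x‖ ≤ C) →
          ∀ x : Rd d,
            ‖iteratedFDeriv ℝ k
                (fun y : Rd d =>
                  (ContinuousLinearMap.id ℝ (Rd d)
                      + fderiv ℝ (fun z : Rd d => ι z - z) y).det - 1) x‖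
              ≤ N * C := by
  obtain ⟨n, rfl⟩ : ∃ n, m = n + 1 := ⟨m - 1, by omega⟩
  obtain ⟨R, hR1, hR⟩ := exists_bound_iteratedFDeriv_of_fderiv_eq_ringInverse (E := Rd d) n hlam Mm
  obtain ⟨Q, hQ⟩ := exists_bound_iteratedFDeriv_detInverseSubOne_comp_fderiv (E := Rd d) n hlam Mm
  refine ⟨n ! * Q * R ^ n, fun ζ ι hζ hdet hM hl hr k hk C hC x => ?_⟩
  replace hζ : ContDiff ℝ (n + 1) ζ := by exact_mod_cast hζ
  replace hk : k ≤ n := by omega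
  have hseg : ∀ x, segment ℝ 0 (fderiv ℝ ζ x) ⊆ detBoundedBall lam Mm := fun x =>
    segment_zero_subset_detBoundedBall (by rw [← norm_iteratedFDeriv_one]; exact hM 1 (by omega) x)
      fun θ hθ => hdet θ hθ x
  have hζK : ∀ x, fderiv ℝ ζ x ∈ detBoundedBall lam Mm := fun x => hseg x (right_mem_segment _ _ _)
  obtain ⟨hι, hDι⟩ := contDiff_and_fderiv_eq_of_inverse_id_add hζ (by simp)
    (fun x => det_ne_zero_of_mem_detBoundedBall hlam (hζK x)) hl hr
  have hc : ContDiff ℝ n (detInverseSubOne ∘ fderiv ℝ ζ) :=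
    contDiffOn_detInverseSubOne.comp_contDiff (hζ.fderiv_right le_rfl) fun x =>
      detBoundedBall_subset hlam Mm (hζK x)
  have hM' : ∀ j, 1 ≤ j → j ≤ n + 1 → ∀ x, ‖iteratedFDeriv ℝ j ζ x‖ ≤ Mm := fun j _ hj => hM j hj
  have hcQ := hQ ζ hζ hseg hM' k hk C hC
  have hQC : 0 ≤ Q * C := (norm_nonneg _).trans (hcQ 0 (Nat.zero_le _) x)
  rw [det_id_add_fderiv_sub_id_sub_one (hι.differentiable (by simp)) hDι]
  calc _ ≤ k ! * (Q * C) * R ^ k :=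
        norm_iteratedFDeriv_comp_le hc (hι.of_le (by simp)) (by exact_mod_cast hk) x
          (fun i hi => hcQ i hi (ι x)) fun i hi1 hik =>
            (hR ζ ι hζ hζK hM' (hι.of_le (by simp)) hDι i hi1 (by omega) x).trans
              (le_self_pow₀ hR1 (by omega))
    _ ≤ n ! * (Q * C) * R ^ n := by gcongr
    _ = n ! * Q * R ^ n * C := by ring

end
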